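/- Let s ∈ ℤ_2 satisfy s² = −n, let e = (n+1)/(2n) + ((1+s)/(2n))·f_Q(X) + ((1−s)/(2n))·f_N(X) ∈ R, and let C = {c ∈ ℤ_2^n : the image of Σ_{j=0}^{n−1} c_j X^j in R lies in the ideal of R generated by e}. Let t ∈ ℤ_2 satisfy n·t² = −1, and let C̃ = {(c₀, …, c_{n−1}, t·Σ_{j=0}^{n−1} c_j) : c ∈ C} ⊆ ℤ_2^{n+1}. Then C̃ is self-dual: C̃ = {v ∈ ℤ_2^{n+1} : Σ_{i=0}^{n} v_i·w_i = 0 for all w ∈ C̃}. -/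

import Mathlib

open Polynomial
open scoped Classical

/-- `f_Q(X) = ∑_{k ∈ Q} X^k`, where `Q` is the set of `k` with `1 ≤ k ≤ n-1` that are
quadratic residues modulo `n`, as a polynomial over the 2-adic integers. -/
noncomputable def fQpoly (n : ℕ) : Polynomial ℤ_[2] :=
  ∑ k ∈ (Finset.Ico 1 n).filter (fun k : ℕ => IsSquare ((k : ZMod n))), X ^ k

/-- `f_N(X) = ∑_{k ∈ N} X^k`, where `N` is the set of `k` with `1 ≤ k ≤ n-1` that are
quadratic nonresidues modulo `n`, as a polynomial over the 2-adic integers. -/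
noncomputable def fNpoly (n : ℕ) : Polynomial ℤ_[2] :=
  ∑ k ∈ (Finset.Ico 1 n).filter (fun k : ℕ => ¬ IsSquare ((k : ZMod n))), X ^ k

/-- The idempotent `α + β f_Q(X) + γ f_N(X)` in `R = ℤ_2[X]/(X^n - 1)`. -/
noncomputable def qrIdempotent (n : ℕ) (α β γ : ℤ_[2]) :
    Polynomial ℤ_[2] ⧸ Ideal.span {(X : Polynomial ℤ_[2]) ^ n - 1} :=
  Ideal.Quotient.mk _ (C α + C β * fQpoly n + C γ * fNpoly n)

/-- The quadratic residue code `C ⊆ ℤ_2^n`: vectors whose associated polynomial lies in the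
ideal of `R = ℤ_2[X]/(X^n - 1)` generated by the idempotent `α + β f_Q + γ f_N`. -/
def qrCode (n : ℕ) (α β γ : ℤ_[2]) : Set (Fin n → ℤ_[2]) :=
  {c | Ideal.Quotient.mk (Ideal.span {(X : Polynomial ℤ_[2]) ^ n - 1})
      (∑ j : Fin n, C (c j) * X ^ (j : ℕ)) ∈ Ideal.span {qrIdempotent n α β γ}}

/-- The extended code `C̃ ⊆ ℤ_2^{n+1}`, obtained by appending `t·Σ c_j` to each codeword. -/
def qrCodeExt (n : ℕ) (α β γ t : ℤ_[2]) : Set (Fin (n + 1) → ℤ_[2]) :=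
  {v | ∃ c ∈ qrCode n α β γ, v = Fin.snoc c (t * ∑ j, c j)}

/-!
Through `X ↦ [1]`, the ring `ℤ_2[X]/(X^n - 1)` is the group algebra `A = ℤ_2[ℤ/n]`, in which `C`
becomes the principal ideal `A e`. Let `N = ∑ₐ [a]`, `Γ = ∑ₐ χ(a) [a]` with `χ` the Legendre symbol,
`ε` the augmentation, and `x ↦ x̄` the involution induced by `a ↦ -a`; then `∑_g c_g d_g` is the
coefficient of `[0]` in `c d̄`. Since `f_Q + f_N = N - 1` and `f_Q - f_N = Γ`, the hypotheses say
`2n e = n + N + sΓ`. As `n ≡ 3 (mod 4)`, `Γ̄ = -Γ`, and a Jacobi sum computation gives `Γ² = N - n`;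
together with `s² = -n` and `N² = nN` this yields `n e ē = N` and `n (e + ē) = n + N`.

For `c, d ∈ A e` the first identity gives `n ∑_g c_g d_g = ε(c) ε(d)`, which the appended coordinates
cancel because `n t² = -1`. Conversely, if `(c, x)` is orthogonal to `C̃`, testing against the
codewords `e [k]` shows `c ē = -x t N`; the second identity then gives `c e = c`, so `c ∈ A e`, and
`x = t ε(c)`.
-/

lemma natCast_mul_left_cancel {A : Type*} [NonAssocSemiring A] [IsAddTorsionFree A] {k : ℕ}
    (hk : k ≠ 0) {x y : A} (h : (k : A) * x = k * y) : x = y :=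
  nsmul_right_injective hk (by simpa only [nsmul_eq_mul] using h)

namespace AddMonoidAlgebra

instance {R M : Type*} [Semiring R] [IsAddTorsionFree R] :
    IsAddTorsionFree (AddMonoidAlgebra R M) :=
  Function.Injective.isAddTorsionFree
    (coeffAddEquiv : AddMonoidAlgebra R M ≃+ (M →₀ R)).toAddMonoidHom coeffAddEquiv.injective

section Finite

variable {R G : Type*} [CommSemiring R] [Fintype G]

lemma univ_sum_single_coeff (f : AddMonoidAlgebra R G) : ∑ g, single g (f.coeff g) = f := by
  conv_rhs => rw [← sum_coeff_single f]
  exact (Finsupp.sum_fintype _ _ (by simp)).symm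

lemma counit_eq_sum_coeff (f : AddMonoidAlgebra R G) :
    Coalgebra.counit (R := R) f = ∑ g, f.coeff g := by
  conv_lhs => rw [← univ_sum_single_coeff f]
  simp

variable (R G) in
noncomputable def normElement : AddMonoidAlgebra R G := ∑ g, single g 1

@[simp]
lemma coeff_normElement (g : G) : (normElement R G).coeff g = 1 := by
  simp [normElement, coeff_sum, Finsupp.single_apply]

@[simp]
lemma counit_normElement : Coalgebra.counit (R := R) (normElement R G) = Fintype.card G := by
  simp [normElement]

lemma eq_smul_normElement {f : AddMonoidAlgebra R G} {r : R} (h : ∀ g, f.coeff g = r) :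
    f = r • normElement R G := by
  ext g
  simp [h]

end Finite

section AddCommGroup

variable {R G : Type*} [CommSemiring R] [AddCommGroup G]

variable (R G) in
noncomputable def negDomain : AddMonoidAlgebra R G ≃ₐ[R] AddMonoidAlgebra R G :=
  domCongr R R (AddEquiv.neg G)

@[simp]
lemma coeff_negDomain (f : AddMonoidAlgebra R G) (g : G) :
    (negDomain R G f).coeff g = f.coeff (-g) :=
  coeff_domCongr _ _ _

variable [Fintype G]

@[simp]
lemma counit_negDomain (f : AddMonoidAlgebra R G) :
    Coalgebra.counit (R := R) (negDomain R G f) = Coalgebra.counit f := by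
  simp only [counit_eq_sum_coeff, coeff_negDomain]
  exact Equiv.sum_comp (Equiv.neg G) _

@[simp]
lemma negDomain_normElement : negDomain R G (normElement R G) = normElement R G := by
  ext g
  simp

lemma mul_normElement (f : AddMonoidAlgebra R G) :
    f * normElement R G = Coalgebra.counit (R := R) f • normElement R G := by
  ext g
  simp [coeff_mul_apply_left, counit_eq_sum_coeff, Finsupp.sum_fintype]

lemma coeff_mul_negDomain (f d : AddMonoidAlgebra R G) (k : G) :
    (f * negDomain R G d).coeff k = ∑ g, f.coeff g * (d * single k 1).coeff g := by
  simp only [coeff_mul_single_apply, mul_one]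
  rw [coeff_mul_apply_left, Finsupp.sum_fintype _ _ (by simp)]
  simp [add_comm]

lemma coeff_mul_negDomain_zero (f d : AddMonoidAlgebra R G) :
    (f * negDomain R G d).coeff 0 = ∑ g, f.coeff g * d.coeff g := by
  simp [coeff_mul_negDomain, ← one_def]

end AddCommGroup

end AddMonoidAlgebra

section QuadraticChar

variable {F : Type*} [Field F] [Fintype F] [DecidableEq F]

theorem quadraticChar_sum_mul_sub (hF : ringChar F ≠ 2) (m : F) :
    ∑ a, quadraticChar F a * quadraticChar F (m - a) =
      quadraticChar F (-1) * ((if m = 0 then Fintype.card F else 0) - 1) := by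
  rcases eq_or_ne m 0 with rfl | hm
  · have hsq (a : F) : quadraticChar F a * quadraticChar F (0 - a) =
        quadraticChar F (-1) * if a = 0 then 0 else 1 := by
      rcases eq_or_ne a 0 with rfl | ha
      · simp
      · rw [zero_sub, neg_eq_neg_one_mul, map_mul, if_neg ha, ← quadraticChar_sq_one ha]
        ring
    rw [Finset.sum_congr rfl fun a _ => hsq a, ← Finset.mul_sum]
    simp [Finset.sum_ite, Finset.filter_ne', Finset.card_erase_of_mem,
      Nat.cast_pred Fintype.card_pos]
  -- Substituting `a = m u` leaves the Jacobi sum `J(χ, χ) = J(χ, χ⁻¹) = -χ(-1)`.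
  · have hJ := jacobiSum_nontrivial_inv (quadraticChar_ne_one hF)
    rw [(quadraticChar_isQuadratic F).inv] at hJ
    have hterm (u : F) : quadraticChar F (m * u) * quadraticChar F (m - m * u) =
        quadraticChar F u * quadraticChar F (1 - u) := by
      rw [← mul_one_sub, map_mul, map_mul]
      linear_combination (quadraticChar F u * quadraticChar F (1 - u)) * quadraticChar_sq_one hm
    rw [← Equiv.sum_comp (Equiv.mulLeft₀ m hm), if_neg hm]
    simp only [Equiv.mulLeft₀_apply, hterm]
    rw [← jacobiSum, hJ]
    ring

namespace AddMonoidAlgebra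

variable (R : Type*) [CommRing R]

noncomputable def quadraticElement : AddMonoidAlgebra R F :=
  ∑ a, single a (quadraticChar F a : R)

variable {R}

@[simp]
lemma coeff_quadraticElement (a : F) :
    (quadraticElement R (F := F)).coeff a = quadraticChar F a := by
  simp [quadraticElement, coeff_sum, Finsupp.single_apply]

lemma negDomain_quadraticElement :
    negDomain R F (quadraticElement R) = (quadraticChar F (-1) : R) • quadraticElement R := by
  ext a
  rw [coeff_negDomain, coeff_smul, Finsupp.smul_apply, coeff_quadraticElement,
    coeff_quadraticElement, neg_eq_neg_one_mul, map_mul, Int.cast_mul, smul_eq_mul]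

lemma quadraticElement_mul_self (hF : ringChar F ≠ 2) :
    quadraticElement R * quadraticElement R =
      (quadraticChar F (-1) : R) • ((Fintype.card F : AddMonoidAlgebra R F) - normElement R F) := by
  ext m
  rw [coeff_mul_apply_left, Finsupp.sum_fintype _ _ (by simp)]
  simp only [coeff_quadraticElement, neg_add_eq_sub]
  have := congrArg (Int.cast : ℤ → R) (quadraticChar_sum_mul_sub hF m)
  push_cast at this
  rw [this]
  simp [coeff_natCast, Finsupp.single_apply, eq_comm]

end AddMonoidAlgebra

end QuadraticChar

namespace AddMonoidAlgebra

section SelfDual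

variable {R G : Type*} [CommRing R] [AddCommGroup G] [Fintype G] {E : AddMonoidAlgebra R G}

local notation "q" => Fintype.card G
local notation "ε" => Coalgebra.counit (R := R) (A := AddMonoidAlgebra R G)

lemma natCast_mul_sum_coeff_mul_coeff
    (hprod : (q : AddMonoidAlgebra R G) * (E * negDomain R G E) = normElement R G)
    (hE : ε E = 1) {c d : AddMonoidAlgebra R G} (hc : c ∈ Ideal.span {E})
    (hd : d ∈ Ideal.span {E}) :
    (q : R) * ∑ g, c.coeff g * d.coeff g = ε c * ε d := by
  obtain ⟨a, rfl⟩ := Ideal.mem_span_singleton'.1 hc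
  obtain ⟨b, rfl⟩ := Ideal.mem_span_singleton'.1 hd
  have h : (q : AddMonoidAlgebra R G) * (a * E * negDomain R G (b * E)) =
      ε (a * negDomain R G b) • normElement R G := by
    rw [← mul_normElement, ← hprod, map_mul]
    ring
  rw [← nsmul_eq_mul] at h
  have h0 := congr(($h).coeff 0)
  rw [coeff_smul, coeff_smul, Finsupp.smul_apply, Finsupp.smul_apply, coeff_mul_negDomain_zero,
    coeff_normElement, smul_eq_mul, mul_one, nsmul_eq_mul] at h0
  simp [h0, hE]

variable [IsAddTorsionFree R]

lemma counit_eq_one_of_natCast_mul_add_negDomain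
    (hsum : (q : AddMonoidAlgebra R G) * (E + negDomain R G E) = q + normElement R G) :
    ε E = 1 := by
  have h := congrArg ε hsum
  simp only [Bialgebra.counit_mul, Bialgebra.counit_natCast, map_add, counit_negDomain,
    counit_normElement] at h
  refine natCast_mul_left_cancel (k := 2 * q) (by simp) ?_
  push_cast
  linear_combination h

variable {t : R}

lemma sum_coeff_mul_coeff_add_eq_zero
    (hprod : (q : AddMonoidAlgebra R G) * (E * negDomain R G E) = normElement R G)
    (hE : ε E = 1) (ht : (q : R) * t ^ 2 = -1) {c d : AddMonoidAlgebra R G}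
    (hc : c ∈ Ideal.span {E}) (hd : d ∈ Ideal.span {E}) :
    ∑ g, c.coeff g * d.coeff g + t * ε c * (t * ε d) = 0 := by
  refine natCast_mul_left_cancel (Fintype.card_ne_zero (α := G)) ?_
  linear_combination natCast_mul_sum_coeff_mul_coeff hprod hE hc hd + ε c * ε d * ht

lemma mem_span_of_forall_sum_coeff_mul_coeff_add_eq_zero
    (hsum : (q : AddMonoidAlgebra R G) * (E + negDomain R G E) = q + normElement R G)
    (ht : (q : R) * t ^ 2 = -1) {c : AddMonoidAlgebra R G} {x : R}
    (h : ∀ d ∈ Ideal.span {E}, ∑ g, c.coeff g * d.coeff g + x * (t * ε d) = 0) :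
    c ∈ Ideal.span {E} ∧ x = t * ε c := by
  have hE := counit_eq_one_of_natCast_mul_add_negDomain hsum
  have hcE : c * negDomain R G E = -(x * t) • normElement R G := by
    refine eq_smul_normElement fun k => ?_
    have hk := h (E * single k 1) (Ideal.mul_mem_right _ _ (Ideal.mem_span_singleton_self E))
    simp only [Bialgebra.counit_mul, hE, counit_single, Bialgebra.counit_one, mul_one] at hk
    rw [coeff_mul_negDomain]
    linear_combination hk
  have hεc : ε c = -(x * t) * q := by
    simpa [hE] using congrArg ε hcE
  -- `q c E = c (q + N - q Ē) = q c + ε(c) N + q x t N = q c`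
  have hcE' : c * E = c := by
    refine natCast_mul_left_cancel (Fintype.card_ne_zero (α := G)) ?_
    have h1 := mul_normElement c
    rw [Algebra.smul_def, hεc, map_mul, map_natCast] at h1
    rw [Algebra.smul_def] at hcE
    linear_combination c * hsum + h1 - (q : AddMonoidAlgebra R G) * hcE
  refine ⟨Ideal.mem_span_singleton'.2 ⟨c, hcE'⟩, ?_⟩
  rw [hεc]
  linear_combination x * ht

end SelfDual

section QuadraticResidueIdempotent

variable {R F : Type*} [CommRing R] [Field F] [Fintype F] [DecidableEq F]
  {s : R} {E : AddMonoidAlgebra R F}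

local notation "q" => Fintype.card F
local notation "N" => normElement R F
local notation "Γ" => quadraticElement R (F := F)
local notation "ι" => algebraMap R (AddMonoidAlgebra R F)

lemma two_mul_natCast_mul_negDomain_eq (hF : ¬IsSquare (-1 : F))
    (hE : 2 * (q : AddMonoidAlgebra R F) * E = q + N + ι s * Γ) :
    2 * (q : AddMonoidAlgebra R F) * negDomain R F E = q + N - ι s * Γ := by
  have h := congrArg (negDomain R F) hE
  simp only [map_mul, map_add, map_ofNat, map_natCast, AlgEquiv.commutes, negDomain_normElement,
    negDomain_quadraticElement, quadraticChar_neg_one_iff_not_isSquare.2 hF, Int.cast_neg,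
    Int.cast_one, neg_smul, one_smul, mul_neg] at h
  rw [h, sub_eq_add_neg]

variable [IsAddTorsionFree R]

lemma natCast_mul_add_negDomain_eq (hF : ¬IsSquare (-1 : F))
    (hE : 2 * (q : AddMonoidAlgebra R F) * E = q + N + ι s * Γ) :
    (q : AddMonoidAlgebra R F) * (E + negDomain R F E) = q + N := by
  refine natCast_mul_left_cancel (k := 2) (by simp) ?_
  push_cast
  linear_combination hE + two_mul_natCast_mul_negDomain_eq hF hE

lemma natCast_mul_mul_negDomain_eq (hF : ¬IsSquare (-1 : F)) (hs : s ^ 2 = -q)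
    (hE : 2 * (q : AddMonoidAlgebra R F) * E = q + N + ι s * Γ) :
    (q : AddMonoidAlgebra R F) * (E * negDomain R F E) = N := by
  have hF2 : ringChar F ≠ 2 := fun h => hF (by rw [neg_one_eq_one_iff.2 h]; exact IsSquare.one)
  have hΓΓ : Γ * Γ = N - q := by
    rw [quadraticElement_mul_self hF2, quadraticChar_neg_one_iff_not_isSquare.2 hF]
    simp
  have hNN : N * N = q * N := by
    rw [mul_normElement, counit_normElement, Nat.cast_smul_eq_nsmul, nsmul_eq_mul]
  have hss : ι s * ι s = -q := by
    rw [← map_mul, ← sq, hs, map_neg, map_natCast]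
  -- `(q + N + sΓ)(q + N - sΓ) = (q + N)² - s²Γ² = 4qN`
  refine natCast_mul_left_cancel (k := 4 * q) (by simp) ?_
  push_cast
  linear_combination (2 * q * negDomain R F E) * hE +
    (q + N + ι s * Γ) * two_mul_natCast_mul_negDomain_eq hF hE + hNN - (Γ * Γ) * hss +
    (q : AddMonoidAlgebra R F) * hΓΓ

end QuadraticResidueIdempotent

end AddMonoidAlgebra

namespace Polynomial

section CyclicQuotient

open AddMonoidAlgebra (single lift)

variable (R : Type*) [CommRing R] (n : ℕ)

local notation "π" => Ideal.Quotient.mk (Ideal.span {(X : R[X]) ^ n - 1})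

lemma mk_X_pow_eq_one : π X ^ n = 1 := by
  rw [← map_pow, ← sub_eq_zero, ← map_one π, ← map_sub, Ideal.Quotient.eq_zero_iff_mem]
  exact Ideal.mem_span_singleton_self _

variable [NeZero n]

noncomputable def quotientSpanXPowSubOneAlgEquiv :
    (R[X] ⧸ Ideal.span {(X : R[X]) ^ n - 1}) ≃ₐ[R] AddMonoidAlgebra R (ZMod n) :=
  AlgEquiv.ofAlgHom
    (Ideal.Quotient.liftₐ _ (aeval (single 1 1)) fun p hp => by
      obtain ⟨r, rfl⟩ := Ideal.mem_span_singleton'.1 hp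
      simp [AddMonoidAlgebra.single_pow, AddMonoidAlgebra.one_def])
    (lift R _ (ZMod n)
      { toFun := fun k => π X ^ k.toAdd.val
        map_one' := by simp
        map_mul' := fun a b => by
          rw [toAdd_mul, ZMod.val_add, ← pow_add, ← pow_eq_pow_mod _ (mk_X_pow_eq_one R n)] })
    (by
      refine AddMonoidAlgebra.algHom_ext (fun k => ?_) ?_
      · simp only [AlgHom.coe_comp, Function.comp_apply, AddMonoidAlgebra.lift_single, one_smul,
          MonoidHom.coe_mk, OneHom.coe_mk, toAdd_ofAdd, map_pow]
        rw [← Ideal.Quotient.mkₐ_eq_mk R, ← AlgHom.comp_apply, Ideal.Quotient.liftₐ_comp]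
        simp [AddMonoidAlgebra.single_pow]
      · ext)
    (by
      refine Ideal.Quotient.algHom_ext R (Polynomial.algHom_ext ?_)
      rw [AlgHom.comp_assoc, Ideal.Quotient.liftₐ_comp]
      simp [ZMod.val_one_eq_one_mod, ← pow_eq_pow_mod _ (mk_X_pow_eq_one R n)])

lemma quotientSpanXPowSubOneAlgEquiv_mk (p : R[X]) :
    quotientSpanXPowSubOneAlgEquiv R n (π p) = aeval (single 1 1 : AddMonoidAlgebra R (ZMod n)) p :=
  rfl

@[simp]
lemma quotientSpanXPowSubOneAlgEquiv_mk_C (r : R) :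
    quotientSpanXPowSubOneAlgEquiv R n (π (C r)) = algebraMap R _ r := by
  simp [quotientSpanXPowSubOneAlgEquiv_mk]

@[simp]
lemma quotientSpanXPowSubOneAlgEquiv_mk_X :
    quotientSpanXPowSubOneAlgEquiv R n (π X) = single 1 1 := by
  simp [quotientSpanXPowSubOneAlgEquiv_mk]

end CyclicQuotient

end Polynomial

@[simp]
lemma ZMod.finEquiv_apply {n : ℕ} [NeZero n] (j : Fin n) :
    ZMod.finEquiv n j = ((j : ℕ) : ZMod n) := by
  obtain ⟨k, rfl⟩ := Nat.exists_eq_succ_of_ne_zero (NeZero.ne n)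
  exact (Fin.cast_val_eq_self j).symm

lemma ZMod.sum_eq_add_sum_Ico_one {M : Type*} [AddCommMonoid M] {n : ℕ} [NeZero n]
    (f : ZMod n → M) : ∑ m, f m = f 0 + ∑ k ∈ Finset.Ico 1 n, f k := by
  rw [← Equiv.sum_comp (ZMod.finEquiv n).toEquiv, ← Nat.cast_zero,
    ← Finset.sum_eq_sum_Ico_succ_bot (Nat.pos_of_neZero n) fun k => f k, ← Finset.range_eq_Ico,
    ← Fin.sum_univ_eq_sum_range]
  simp

namespace AddMonoidAlgebra

section OfFin

variable {R : Type*} [CommSemiring R] {n : ℕ} [NeZero n]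

noncomputable def ofFin : (Fin n → R) ≃ AddMonoidAlgebra R (ZMod n) :=
  ((ZMod.finEquiv n).toEquiv.arrowCongr (Equiv.refl R)).trans
    (Finsupp.equivFunOnFinite.symm.trans coeffEquiv.symm)

@[simp]
lemma coeff_ofFin (c : Fin n → R) (j : Fin n) : (ofFin c).coeff ((j : ℕ) : ZMod n) = c j := by
  simp [ofFin, ← ZMod.finEquiv_apply]

lemma ofFin_eq_sum_single (c : Fin n → R) :
    ofFin c = ∑ j : Fin n, single ((j : ℕ) : ZMod n) (c j) := by
  rw [← univ_sum_single_coeff (ofFin c), ← (ZMod.finEquiv n).toEquiv.sum_comp]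
  simp

lemma sum_coeff_ofFin_mul_coeff_ofFin (c d : Fin n → R) :
    ∑ g, (ofFin c).coeff g * (ofFin d).coeff g = ∑ j, c j * d j := by
  rw [← (ZMod.finEquiv n).toEquiv.sum_comp]
  simp

lemma counit_ofFin (c : Fin n → R) : Coalgebra.counit (R := R) (ofFin c) = ∑ j, c j := by
  rw [counit_eq_sum_coeff, ← (ZMod.finEquiv n).toEquiv.sum_comp]
  simp

end OfFin

end AddMonoidAlgebra

section Codes

variable {R : Type*} [CommRing R] {n : ℕ}

def extendCode (C : Set (Fin n → R)) (t : R) : Set (Fin (n + 1) → R) :=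
  {v | ∃ c ∈ C, v = Fin.snoc c (t * ∑ j, c j)}

def dualCode {ι : Type*} [Fintype ι] (C : Set (ι → R)) : Set (ι → R) :=
  {v | ∀ w ∈ C, ∑ i, v i * w i = 0}

open AddMonoidAlgebra in
theorem extendCode_eq_dualCode [NeZero n] [IsAddTorsionFree R] {E : AddMonoidAlgebra R (ZMod n)}
    {t : R} (C : Set (Fin n → R)) (hC : ∀ c, c ∈ C ↔ ofFin c ∈ Ideal.span {E})
    (hprod : (Fintype.card (ZMod n) : AddMonoidAlgebra R (ZMod n)) * (E * negDomain R _ E) =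
      normElement R (ZMod n))
    (hsum : (Fintype.card (ZMod n) : AddMonoidAlgebra R (ZMod n)) * (E + negDomain R _ E) =
      Fintype.card (ZMod n) + normElement R (ZMod n))
    (ht : (n : R) * t ^ 2 = -1) :
    extendCode C t = dualCode (extendCode C t) := by
  rw [← ZMod.card n] at ht
  have hE := counit_eq_one_of_natCast_mul_add_negDomain hsum
  ext v
  constructor
  · rintro ⟨c, hc, rfl⟩ w ⟨d, hd, rfl⟩
    simp only [Fin.sum_univ_castSucc, Fin.snoc_castSucc, Fin.snoc_last]
    rw [← sum_coeff_ofFin_mul_coeff_ofFin, ← counit_ofFin, ← counit_ofFin]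
    exact sum_coeff_mul_coeff_add_eq_zero hprod hE ht ((hC c).1 hc) ((hC d).1 hd)
  · intro hv
    obtain ⟨hmem, hlast⟩ := mem_span_of_forall_sum_coeff_mul_coeff_add_eq_zero hsum ht
      (c := ofFin (Fin.init v)) (x := v (Fin.last n)) fun d hd => by
        obtain ⟨d, rfl⟩ := ofFin.surjective d
        have hvd := hv _ ⟨d, (hC d).2 hd, rfl⟩
        simp only [Fin.sum_univ_castSucc, Fin.snoc_castSucc, Fin.snoc_last] at hvd
        rwa [sum_coeff_ofFin_mul_coeff_ofFin, counit_ofFin]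
    refine ⟨Fin.init v, (hC _).2 hmem, ?_⟩
    rw [← counit_ofFin, ← hlast, Fin.snoc_init_self]

end Codes

section QuadraticResidueCode

open AddMonoidAlgebra

variable {n : ℕ}

local notation "ψ" => quotientSpanXPowSubOneAlgEquiv ℤ_[2] n
local notation "π" => Ideal.Quotient.mk (Ideal.span {(X : Polynomial ℤ_[2]) ^ n - 1})

lemma mem_qrCode_iff [NeZero n] (α β γ : ℤ_[2]) (c : Fin n → ℤ_[2]) :
    c ∈ qrCode n α β γ ↔ ofFin c ∈ Ideal.span {ψ (qrIdempotent n α β γ)} := by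
  simp only [qrCode, Set.mem_ofPred_eq]
  rw [Ideal.mem_span_singleton, Ideal.mem_span_singleton,
    ← map_dvd_iff ψ, ofFin_eq_sum_single]
  simp [quotientSpanXPowSubOneAlgEquiv_mk, single_pow]

variable [Fact n.Prime]

lemma quotientSpanXPowSubOneAlgEquiv_fQpoly_add_fNpoly :
    ψ (π (fQpoly n)) + ψ (π (fNpoly n)) = normElement ℤ_[2] (ZMod n) - 1 := by
  rw [← map_add, ← map_add, fQpoly, fNpoly, Finset.sum_filter_add_sum_filter_not, map_sum,
    map_sum, normElement, ZMod.sum_eq_add_sum_Ico_one, one_def]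
  simp [single_pow]

lemma quotientSpanXPowSubOneAlgEquiv_fQpoly_sub_fNpoly :
    ψ (π (fQpoly n)) - ψ (π (fNpoly n)) = quadraticElement ℤ_[2] := by
  rw [← map_sub, ← map_sub, fQpoly, fNpoly, Finset.sum_filter, Finset.sum_filter,
    ← Finset.sum_sub_distrib, map_sum, map_sum, quadraticElement, ZMod.sum_eq_add_sum_Ico_one,
    quadraticChar_zero, Int.cast_zero, single_zero, zero_add]
  refine Finset.sum_congr rfl fun k hk => ?_
  have hk0 : (k : ZMod n) ≠ 0 := by
    rw [Ne, ZMod.natCast_eq_zero_iff]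
    exact Nat.not_dvd_of_pos_of_lt (Finset.mem_Ico.1 hk).1 (Finset.mem_Ico.1 hk).2
  by_cases hsq : IsSquare (k : ZMod n)
  · simp [hsq, single_pow, (quadraticChar_one_iff_isSquare hk0).2 hsq]
  · simp [hsq, single_pow, quadraticChar_neg_one_iff_not_isSquare.2 hsq]

lemma two_mul_natCast_mul_qrIdempotent {s α β γ : ℤ_[2]} (hα : 2 * (n : ℤ_[2]) * α = n + 1)
    (hβ : 2 * (n : ℤ_[2]) * β = 1 + s) (hγ : 2 * (n : ℤ_[2]) * γ = 1 - s) :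
    2 * (Fintype.card (ZMod n) : AddMonoidAlgebra ℤ_[2] (ZMod n)) * ψ (qrIdempotent n α β γ) =
      (Fintype.card (ZMod n) : AddMonoidAlgebra ℤ_[2] (ZMod n)) + normElement ℤ_[2] (ZMod n) +
        algebraMap ℤ_[2] _ s * quadraticElement ℤ_[2] := by
  have hι {a b : ℤ_[2]} (h : 2 * (n : ℤ_[2]) * a = b) :
      2 * (n : AddMonoidAlgebra ℤ_[2] (ZMod n)) * algebraMap ℤ_[2] _ a = algebraMap ℤ_[2] _ b := by
    rw [← h, map_mul, map_mul, map_ofNat, map_natCast]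
  have hα' := hι hα
  have hβ' := hι hβ
  have hγ' := hι hγ
  simp only [map_add, map_sub, map_one, map_natCast] at hα' hβ' hγ'
  simp only [ZMod.card, qrIdempotent, map_add, map_mul, quotientSpanXPowSubOneAlgEquiv_mk_C]
  linear_combination hα' + ψ (π (fQpoly n)) * hβ' + ψ (π (fNpoly n)) * hγ' +
    quotientSpanXPowSubOneAlgEquiv_fQpoly_add_fNpoly (n := n) +
    algebraMap ℤ_[2] _ s * quotientSpanXPowSubOneAlgEquiv_fQpoly_sub_fNpoly (n := n)

end QuadraticResidueCode

theorem stmt18 (n : ℕ) (hn : n.Prime) (hn8 : n % 8 = 7)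
    (s : ℤ_[2]) (hs : s ^ 2 = -(n : ℤ_[2]))
    (α β γ : ℤ_[2])
    (hα : 2 * (n : ℤ_[2]) * α = n + 1)
    (hβ : 2 * (n : ℤ_[2]) * β = 1 + s)
    (hγ : 2 * (n : ℤ_[2]) * γ = 1 - s)
    (t : ℤ_[2]) (ht : (n : ℤ_[2]) * t ^ 2 = -1) :
    qrCodeExt n α β γ t =
      {v : Fin (n + 1) → ℤ_[2] | ∀ w ∈ qrCodeExt n α β γ t, ∑ i, v i * w i = 0} := by
  have := Fact.mk hn
  have hF : ¬IsSquare (-1 : ZMod n) := by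
    rw [ZMod.exists_sq_eq_neg_one_iff]
    omega
  have hs' : s ^ 2 = -(Fintype.card (ZMod n) : ℤ_[2]) := by rwa [ZMod.card]
  have he := two_mul_natCast_mul_qrIdempotent hα hβ hγ
  exact extendCode_eq_dualCode (qrCode n α β γ) (mem_qrCode_iff α β γ)
    (AddMonoidAlgebra.natCast_mul_mul_negDomain_eq hF hs' he)
    (AddMonoidAlgebra.natCast_mul_add_negDomain_eq hF he) ht
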